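/- Let α, β > 0 and ε ∈ ℝ, and let f_μ(x) = (β/(2α·Γ(1/β)))·exp(−(|x−μ|/α)^β) denote the symmetric generalized Gaussian density with location μ, scale α, and shape β. Set p = f_0 and q = f_ε, and suppose χ := ∫_ℝ q(x)²/p(x) dx = E_q[exp(−(|B−ε|^β − |B|^β)/α^β)] < ∞. Given an integer d ≥ 1 and group sizes m₁,…,m_d ∈ ℕ with N = m₁+…+m_d, define probability measures on ℝ^N (coordinates indexed by pairs (j,k), j ∈ {1,…,d}, k ∈ {1,…,m_j}): Q has density ∏_{j=1}^d ∏_{k=1}^{m_j} p(b_j^{(k)}), and P has density (1/d) ∑_{j=1}^d [∏_{k=1}^{m_j} q(b_j^{(k)})] · ∏_{j'≠j} ∏_{k=1}^{m_{j'}} p(b_{j'}^{(k)}). Then TV(P, Q) ≤ (1/(2√d)) · [ (1/d) ∑_{j=1}^d χ^{m_j} − 1 ]^{1/2}. -/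

import Mathlib

/-! Total variation is at most half the `L¹` distance of the densities, and by Cauchy–Schwarz
against the reference density `∏ p` this is at most half the square root of the χ²-divergence
`∫ f_P² / f_Q - 1`. Expanding the square of the mixture density `f_P = d⁻¹ ∑ⱼ gⱼ`, every
quotient `gⱼ gⱼ' / f_Q` is again a product over coordinates: for `j ≠ j'` its factors are `q`
(on blocks `j`, `j'`) or `p`, so it integrates to `1`, while for `j = j'` the `mⱼ` coordinates
of block `j` each contribute `∫ q² / p = χ`. -/

open MeasureTheory

/-- Total variation distance between two measures:
`TV(P, Q) = sup over measurable sets s of |P s - Q s|`. -/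
noncomputable def tvDist {Ω : Type*} [MeasurableSpace Ω] (P Q : Measure Ω) : ℝ :=
  ⨆ s : {s : Set Ω // MeasurableSet s}, |(P s.1).toReal - (Q s.1).toReal|

open Real

noncomputable def genGaussianPDFReal (α β μ x : ℝ) : ℝ :=
  β / (2 * α * Gamma (1 / β)) * exp (-(|x - μ| / α) ^ β)

section GenGaussian

variable {α β : ℝ}

lemma integral_exp_neg_abs_sub_div_rpow (hα : 0 < α) (hβ : 0 < β) (μ : ℝ) :
    ∫ x, exp (-(|x - μ| / α) ^ β) = 2 * α * Gamma (1 / β) / β := by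
  rw [integral_sub_right_eq_self (fun x => exp (-(|x| / α) ^ β)) μ]
  have abs_div_eq : ∀ x, |x| / α = |x / α| := fun x => by rw [abs_div, abs_of_pos hα]
  simp_rw [abs_div_eq]
  rw [Measure.integral_comp_div (fun y => exp (-|y| ^ β)) α,
    integral_comp_abs (f := fun y => exp (-y ^ β)), integral_exp_neg_rpow hβ,
    Gamma_add_one (one_div_pos.2 hβ).ne', abs_of_pos hα, smul_eq_mul]
  field_simp

lemma genGaussianPDFReal_pos (hα : 0 < α) (hβ : 0 < β) (μ x : ℝ) :
    0 < genGaussianPDFReal α β μ x := by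
  have := Gamma_pos_of_pos (one_div_pos.2 hβ)
  unfold genGaussianPDFReal
  positivity

lemma integral_genGaussianPDFReal (hα : 0 < α) (hβ : 0 < β) (μ : ℝ) :
    ∫ x, genGaussianPDFReal α β μ x = 1 := by
  have := Gamma_pos_of_pos (one_div_pos.2 hβ)
  unfold genGaussianPDFReal
  rw [integral_const_mul, integral_exp_neg_abs_sub_div_rpow hα hβ]
  field_simp

end GenGaussian

section ChiSquare

variable {X : Type*} [MeasurableSpace X] {μ : Measure X}

lemma toReal_withDensity_ofReal_apply {f : X → ℝ} (hf : Integrable f μ) (hf0 : ∀ x, 0 ≤ f x)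
    {s : Set X} (hs : MeasurableSet s) :
    ((μ.withDensity fun x => ENNReal.ofReal (f x)) s).toReal = ∫ x in s, f x ∂μ := by
  rw [withDensity_apply _ hs, ← ofReal_integral_eq_lintegral_ofReal hf.integrableOn
    (Filter.Eventually.of_forall hf0), ENNReal.toReal_ofReal (integral_nonneg hf0)]

lemma tvDist_withDensity_le_half_integral_abs_sub {f g : X → ℝ} (hf : Integrable f μ)
    (hg : Integrable g μ) (hf0 : ∀ x, 0 ≤ f x) (hg0 : ∀ x, 0 ≤ g x)
    (hfg : ∫ x, f x ∂μ = ∫ x, g x ∂μ) :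
    tvDist (μ.withDensity fun x => ENNReal.ofReal (f x))
        (μ.withDensity fun x => ENNReal.ofReal (g x)) ≤ 1 / 2 * ∫ x, |f x - g x| ∂μ := by
  refine ciSup_le fun ⟨s, hs⟩ => ?_
  rw [toReal_withDensity_ofReal_apply hf hf0 hs, toReal_withDensity_ofReal_apply hg hg0 hs,
    ← integral_sub hf.integrableOn hg.integrableOn]
  have h_int : Integrable (fun x => f x - g x) μ := hf.sub hg
  have h_compl : ∫ x in sᶜ, f x - g x ∂μ = -∫ x in s, f x - g x ∂μ := by
    have := integral_add_compl hs h_int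
    rw [integral_sub hf hg, hfg, sub_self] at this
    linarith
  have h_split := integral_add_compl hs h_int.abs
  have h_s : |∫ x in s, f x - g x ∂μ| ≤ ∫ x in s, |f x - g x| ∂μ := abs_integral_le_integral_abs
  have h_sc : |∫ x in sᶜ, f x - g x ∂μ| ≤ ∫ x in sᶜ, |f x - g x| ∂μ :=
    abs_integral_le_integral_abs
  rw [h_compl, abs_neg] at h_sc
  linarith

lemma sq_integral_abs_le_integral_sq_div {h w : X → ℝ} (hw0 : ∀ x, 0 < w x)
    (hw : ∫ x, w x ∂μ = 1) (hh : Integrable h μ) (hhw : Integrable (fun x => h x ^ 2 / w x) μ) :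
    (∫ x, |h x| ∂μ) ^ 2 ≤ ∫ x, h x ^ 2 / w x ∂μ := by
  set c := ∫ x, |h x| ∂μ
  have hwi : Integrable w μ := .of_integral_ne_zero (hw ▸ one_ne_zero)
  have hsq : ∀ x, h x ^ 2 / w x - 2 * c * |h x| + c ^ 2 * w x = (|h x| - c * w x) ^ 2 / w x :=
    fun x => by field_simp [(hw0 x).ne']; linear_combination (sq_abs (h x)).symm
  have h_nonneg : 0 ≤ ∫ x, h x ^ 2 / w x - 2 * c * |h x| + c ^ 2 * w x ∂μ :=
    integral_nonneg fun x => by rw [hsq]; exact div_nonneg (sq_nonneg _) (hw0 x).le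
  rw [integral_add (f := fun x => h x ^ 2 / w x - 2 * c * |h x|)
      (hhw.sub (hh.abs.const_mul _)) (hwi.const_mul _),
    integral_sub hhw (hh.abs.const_mul _), integral_const_mul, integral_const_mul, hw] at h_nonneg
  linarith

lemma tvDist_withDensity_le_half_sqrt_chiSq {f g : X → ℝ} (hf0 : ∀ x, 0 ≤ f x)
    (hg0 : ∀ x, 0 < g x) (hf : ∫ x, f x ∂μ = 1) (hg : ∫ x, g x ∂μ = 1)
    (hfg : Integrable (fun x => f x ^ 2 / g x) μ) :
    tvDist (μ.withDensity fun x => ENNReal.ofReal (f x))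
        (μ.withDensity fun x => ENNReal.ofReal (g x)) ≤
      1 / 2 * √(∫ x, f x ^ 2 / g x ∂μ - 1) := by
  have hfi : Integrable f μ := .of_integral_ne_zero (hf ▸ one_ne_zero)
  have hgi : Integrable g μ := .of_integral_ne_zero (hg ▸ one_ne_zero)
  have h_expand : (fun x => (f x - g x) ^ 2 / g x) = fun x => f x ^ 2 / g x - 2 * f x + g x :=
    funext fun x => by field_simp [(hg0 x).ne']; ring
  have h_chiSq : ∫ x, (f x - g x) ^ 2 / g x ∂μ = ∫ x, f x ^ 2 / g x ∂μ - 1 := by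
    rw [h_expand, integral_add (f := fun x => f x ^ 2 / g x - 2 * f x)
      (hfg.sub (hfi.const_mul 2)) hgi, integral_sub hfg (hfi.const_mul 2), integral_const_mul,
      hf, hg]
    ring
  calc _ ≤ 1 / 2 * ∫ x, |f x - g x| ∂μ :=
        tvDist_withDensity_le_half_integral_abs_sub hfi hgi hf0 (fun x => (hg0 x).le)
          (hf.trans hg.symm)
    _ ≤ 1 / 2 * √(∫ x, f x ^ 2 / g x ∂μ - 1) := by
        gcongr
        rw [← h_chiSq]
        exact le_sqrt_of_sq_le (sq_integral_abs_le_integral_sq_div hg0 hg (hfi.sub hgi)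
          (h_expand ▸ (hfg.sub (hfi.const_mul 2)).add hgi))

end ChiSquare

section BlockDensity

variable {ι : Type*} [Fintype ι] [DecidableEq ι] {κ : ι → Type*} [∀ j, Fintype (κ j)] {E : Type*}

noncomputable def blockDensity (p q : E → ℝ) (j : ι) (b : (Σ j, κ j) → E) : ℝ :=
  ∏ i, (if i.1 = j then q else p) (b i)

noncomputable def mixtureDensity (p q : E → ℝ) (b : (Σ j, κ j) → E) : ℝ :=
  1 / Fintype.card ι * ∑ j, blockDensity p q j b

variable {p q : E → ℝ}

lemma prod_mul_prod_erase_eq_blockDensity (j : ι) (b : (Σ j, κ j) → E) :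
    (∏ k, q (b ⟨j, k⟩)) * ∏ j' ∈ Finset.univ.erase j, ∏ k, p (b ⟨j', k⟩) =
      blockDensity p q j b := by
  rw [blockDensity, Fintype.prod_sigma, ← Finset.mul_prod_erase _ _ (Finset.mem_univ j)]
  congr 1
  · simp
  · exact Finset.prod_congr rfl fun j' hj' => by simp [Finset.ne_of_mem_erase hj']

lemma mixtureDensity_nonneg (hp : ∀ x, 0 ≤ p x) (hq : ∀ x, 0 ≤ q x) (b : (Σ j, κ j) → E) :
    0 ≤ mixtureDensity p q b :=
  mul_nonneg (by positivity) <| Finset.sum_nonneg fun j _ => Finset.prod_nonneg fun i _ => by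
    split_ifs
    exacts [hq _, hp _]

lemma ite_mul_ite_div_self (hp : ∀ x, 0 < p x) (s t : Prop) [Decidable s] [Decidable t] (x : E) :
    (if s then q else p) x * (if t then q else p) x / p x =
      (if s ∧ t then fun x => q x ^ 2 / p x else if s ∨ t then q else p) x := by
  have := (hp x).ne'
  by_cases hs : s <;> by_cases ht : t <;> simp [hs, ht] <;> field_simp

lemma blockDensity_mul_blockDensity_div (hp : ∀ x, 0 < p x) (j j' : ι) (b : (Σ j, κ j) → E) :
    blockDensity p q j b * blockDensity p q j' b / ∏ i, p (b i) =
      ∏ i, (if i.1 = j ∧ i.1 = j' then fun x => q x ^ 2 / p x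
        else if i.1 = j ∨ i.1 = j' then q else p) (b i) := by
  simp only [blockDensity, ← Finset.prod_mul_distrib, ← Finset.prod_div_distrib,
    ite_mul_ite_div_self hp]

variable [MeasureSpace E] [SigmaFinite (volume : Measure E)]

lemma integral_blockDensity (hp : ∫ x, p x = 1) (hq : ∫ x, q x = 1) (j : ι) :
    ∫ b : (Σ j, κ j) → E, blockDensity p q j b = 1 := by
  simp only [blockDensity]
  rw [integral_fintype_prod_volume_eq_prod (fun i : Σ j, κ j => if i.1 = j then q else p)]
  exact Finset.prod_eq_one fun i _ => by split_ifs <;> assumption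

lemma integral_mixtureDensity [Nonempty ι] (hp : ∫ x, p x = 1) (hq : ∫ x, q x = 1) :
    ∫ b : (Σ j, κ j) → E, mixtureDensity p q b = 1 := by
  have hint : ∀ j, Integrable (blockDensity (κ := κ) p q j) := fun j =>
    .of_integral_ne_zero ((integral_blockDensity (κ := κ) hp hq j).symm ▸ one_ne_zero)
  simp only [mixtureDensity]
  rw [integral_const_mul, integral_finsetSum _ fun j _ => hint j]
  simp [integral_blockDensity hp hq]

lemma integrable_blockDensity_mul_blockDensity_div (hp0 : ∀ x, 0 < p x)
    (hp : ∫ x, p x = 1) (hq : ∫ x, q x = 1) (hχ : Integrable fun x => q x ^ 2 / p x) (j j' : ι) :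
    Integrable fun b : (Σ j, κ j) → E =>
      blockDensity p q j b * blockDensity p q j' b / ∏ i, p (b i) := by
  have hpi : Integrable p := .of_integral_ne_zero (hp ▸ one_ne_zero)
  have hqi : Integrable q := .of_integral_ne_zero (hq ▸ one_ne_zero)
  simp only [blockDensity_mul_blockDensity_div hp0]
  exact Integrable.fintype_prod_dep fun i => by split_ifs <;> assumption

lemma integral_blockDensity_mul_blockDensity_div (hp0 : ∀ x, 0 < p x)
    (hp : ∫ x, p x = 1) (hq : ∫ x, q x = 1) (j j' : ι) :
    ∫ b : (Σ j, κ j) → E, blockDensity p q j b * blockDensity p q j' b / ∏ i, p (b i) =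
      if j = j' then (∫ x, q x ^ 2 / p x) ^ Fintype.card (κ j) else 1 := by
  simp only [blockDensity_mul_blockDensity_div hp0]
  rw [integral_fintype_prod_volume_eq_prod (fun i : Σ j, κ j => if i.1 = j ∧ i.1 = j' then
    fun x => q x ^ 2 / p x else if i.1 = j ∨ i.1 = j' then q else p), Fintype.prod_sigma]
  simp only [apply_ite (fun f : E → ℝ => ∫ x, f x), hp, hq, ite_self, Finset.prod_ite_irrel,
    Finset.prod_const, Finset.card_univ, one_pow]
  by_cases hjj : j = j'
  · subst hjj
    simp
  · rw [if_neg hjj]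
    exact Finset.prod_eq_one fun i _ => by rw [if_neg]; rintro ⟨rfl, rfl⟩; exact hjj rfl

omit [MeasureSpace E] [SigmaFinite (volume : Measure E)] in
lemma mixtureDensity_sq_div (b : (Σ j, κ j) → E) :
    mixtureDensity p q b ^ 2 / ∏ i, p (b i) = (1 / Fintype.card ι) ^ 2 *
      ∑ j, ∑ j', blockDensity p q j b * blockDensity p q j' b / ∏ i, p (b i) := by
  simp only [mixtureDensity, mul_pow, sq (∑ j, _), Finset.sum_mul_sum, mul_div_assoc,
    Finset.sum_div]

lemma integrable_mixtureDensity_sq_div (hp0 : ∀ x, 0 < p x) (hp : ∫ x, p x = 1)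
    (hq : ∫ x, q x = 1) (hχ : Integrable fun x => q x ^ 2 / p x) :
    Integrable fun b : (Σ j, κ j) → E => mixtureDensity p q b ^ 2 / ∏ i, p (b i) := by
  simp only [mixtureDensity_sq_div]
  exact (integrable_finsetSum _ fun j _ => integrable_finsetSum _ fun j' _ =>
    integrable_blockDensity_mul_blockDensity_div hp0 hp hq hχ j j').const_mul _

lemma integral_mixtureDensity_sq_div_sub_one [Nonempty ι] (hp0 : ∀ x, 0 < p x)
    (hp : ∫ x, p x = 1) (hq : ∫ x, q x = 1) (hχ : Integrable fun x => q x ^ 2 / p x) :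
    (∫ b : (Σ j, κ j) → E, mixtureDensity p q b ^ 2 / ∏ i, p (b i)) - 1 =
      1 / Fintype.card ι *
        (1 / Fintype.card ι * ∑ j, (∫ x, q x ^ 2 / p x) ^ Fintype.card (κ j) - 1) := by
  have hint := integrable_blockDensity_mul_blockDensity_div (κ := κ) hp0 hp hq hχ
  simp only [mixtureDensity_sq_div]
  rw [integral_const_mul, integral_finsetSum _ fun j _ => integrable_finsetSum _ fun j' _ =>
    hint j j']
  simp only [integral_finsetSum _ fun j' _ => hint _ j',
    integral_blockDensity_mul_blockDensity_div hp0 hp hq]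
  have h_row : ∀ (j : ι) (a : ℝ), ∑ j', (if j = j' then a else 1) = (a - 1) + Fintype.card ι :=
    fun j a => by
      have : ∀ j', (if j = j' then a else 1) = (if j = j' then a - 1 else 0) + 1 :=
        fun j' => by split_ifs <;> ring
      simp [this, Finset.sum_add_distrib]
  simp only [h_row, Finset.sum_add_distrib, Finset.sum_sub_distrib, Finset.sum_const,
    Finset.card_univ, nsmul_eq_mul]
  have : (Fintype.card ι : ℝ) ≠ 0 := by positivity
  field_simp
  ring

end BlockDensity

/-- Symmetric generalized Gaussian version of the TV bound: with
`f_μ(x) = (β/(2αΓ(1/β)))·exp(-(|x-μ|/α)^β)`, `p = f₀`, `q = f_ε`, and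
`χ = ∫ q²/p < ∞`, let `Q` be the product measure on `ℝ^N` (coordinates indexed by `(j,k)`,
`j < d`, `k < m j`) with all coordinates of density `p`, and `P` the measure with density
`(1/d) ∑_j ∏_k q(b_j^{(k)}) ∏_{j'≠j} ∏_k p(b_{j'}^{(k)})`. Then
`TV(P, Q) ≤ (1/(2√d)) · ((1/d) ∑_j χ^{m_j} - 1)^{1/2}`. -/
theorem tv_bound_mixture_gen_gaussian (α β ε : ℝ) (hα : 0 < α) (hβ : 0 < β)
    (p q : ℝ → ℝ)
    (hp : ∀ x, p x = (β / (2 * α * Real.Gamma (1 / β))) *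
      Real.exp (-(|x - 0| / α) ^ β))
    (hq : ∀ x, q x = (β / (2 * α * Real.Gamma (1 / β))) *
      Real.exp (-(|x - ε| / α) ^ β))
    (χ : ℝ) (hχint : Integrable (fun x => (q x) ^ 2 / p x))
    (hχ : χ = ∫ x, (q x) ^ 2 / p x)
    (d : ℕ) (hd : 1 ≤ d) (m : Fin d → ℕ)
    (P Q : Measure (((j : Fin d) × Fin (m j)) → ℝ))
    (hQ : Q = volume.withDensity fun b => ENNReal.ofReal (∏ i, p (b i)))
    (hP : P = volume.withDensity fun b => ENNReal.ofReal
      ((1 / d : ℝ) * ∑ j : Fin d,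
        (∏ k : Fin (m j), q (b ⟨j, k⟩)) *
          ∏ j' ∈ Finset.univ.erase j, ∏ k : Fin (m j'), p (b ⟨j', k⟩))) :
    tvDist P Q ≤
      (1 / (2 * Real.sqrt d)) * Real.sqrt ((1 / d : ℝ) * ∑ j, χ ^ (m j) - 1) := by
  have : Nonempty (Fin d) := ⟨⟨0, hd⟩⟩
  have hp_eq : p = genGaussianPDFReal α β 0 := funext hp
  have hq_eq : q = genGaussianPDFReal α β ε := funext hq
  have hp_pos : ∀ x, 0 < p x := hp_eq ▸ genGaussianPDFReal_pos hα hβ 0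
  have hq_pos : ∀ x, 0 < q x := hq_eq ▸ genGaussianPDFReal_pos hα hβ ε
  have hp_one : ∫ x, p x = 1 := hp_eq ▸ integral_genGaussianPDFReal hα hβ 0
  have hq_one : ∫ x, q x = 1 := hq_eq ▸ integral_genGaussianPDFReal hα hβ ε
  have hP_eq : P = volume.withDensity fun b => ENNReal.ofReal (mixtureDensity p q b) := by
    rw [hP]
    simp_rw [prod_mul_prod_erase_eq_blockDensity (κ := fun j => Fin (m j)), mixtureDensity,
      Fintype.card_fin]
  have h_chiSq := integral_mixtureDensity_sq_div_sub_one (κ := fun j => Fin (m j))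
    hp_pos hp_one hq_one hχint
  simp only [Fintype.card_fin, ← hχ] at h_chiSq
  calc tvDist P Q ≤ 1 / 2 * √(1 / d * (1 / d * ∑ j, χ ^ m j - 1)) := by
        rw [hP_eq, hQ, ← h_chiSq]
        exact tvDist_withDensity_le_half_sqrt_chiSq
          (mixtureDensity_nonneg (fun x => (hp_pos x).le) (fun x => (hq_pos x).le))
          (fun b => Finset.prod_pos fun i _ => hp_pos _) (integral_mixtureDensity hp_one hq_one)
          (by rw [integral_fintype_prod_volume_eq_pow p, hp_one, one_pow])
          (integrable_mixtureDensity_sq_div hp_pos hp_one hq_one hχint)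
    _ = _ := by
        rw [Real.sqrt_mul (by positivity), one_div (d : ℝ), Real.sqrt_inv]
        ring
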